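/- arXiv:2209.12740 — 5 statements merged into one kernel-verified Lean document; each statement's English description precedes it below -/
import Mathlib

section
/- There is a well-defined ℤ-linear map σ : 𝔏₃ ⊗ ℤ/2ℤ → H ⊗ ℤ/2ℤ satisfying σ([[a,b],c] ⊗ 1) = ω(b,c)·(a ⊗ 1) + ω(a,c)·(b ⊗ 1) for all a, b, c ∈ H. -/
/-!
Let `𝔏` act on `ℤ ⊕ H ⊕ ℤ ⊕ H` by letting each `a ∈ H` act as a raising operator
`n ↦ n • a`, `v ↦ ω(a, v)`, `n ↦ n • a`. A product `x y z` of three such operators sends the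
generator of the bottom summand to `ω(y, z) • x` in the top one, so expanding
`[[a, b], c] = abc - bac - cab + cba` gives the `ℤ`-linear map
`[[a, b], c] ↦ ω(b, c) • a - ω(a, c) • b - 2 ω(a, b) • c` on `𝔏₃`. After tensoring with `ℤ/2ℤ`
the last term vanishes and the sign in the middle disappears.
-/

open scoped TensorProduct

noncomputable section

/-- The free Lie ring `𝔏` on the `2g` generators. -/
abbrev L (g : ℕ) : Type := FreeLieAlgebra ℤ (Fin (2 * g))

/-- The free abelian group `H` of rank `2g`. -/
abbrev H (g : ℕ) : Type := Fin (2 * g) → ℤ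

/-- The canonical inclusion of `H` into `𝔏` as the degree `1` part. -/
def toL (g : ℕ) : H g →ₗ[ℤ] L g where
  toFun v := ∑ i, v i • FreeLieAlgebra.of ℤ i
  map_add' x y := by simp [add_smul, Finset.sum_add_distrib]
  map_smul' c x := by simp [Finset.smul_sum, smul_smul]

/-- Index of the basis element `aᵢ`. -/
def aIdx (g : ℕ) (i : Fin g) : Fin (2 * g) := ⟨i.1, by have := i.2; omega⟩

/-- Index of the basis element `bᵢ`. -/
def bIdx (g : ℕ) (i : Fin g) : Fin (2 * g) := ⟨g + i.1, by have := i.2; omega⟩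

/-- The basis element `aᵢ` of `H`. -/
def aV (g : ℕ) (i : Fin g) : H g := Pi.single (aIdx g i) 1

/-- The basis element `bᵢ` of `H`. -/
def bV (g : ℕ) (i : Fin g) : H g := Pi.single (bIdx g i) 1

/-- The symplectic pairing `ω : H × H → ℤ`, with `ω(aᵢ,bⱼ) = δᵢⱼ`, `ω(aᵢ,aⱼ) = ω(bᵢ,bⱼ) = 0`. -/
def omegaPair (g : ℕ) (x y : H g) : ℤ :=
  ∑ i : Fin g, (x (aIdx g i) * y (bIdx g i) - x (bIdx g i) * y (aIdx g i))

/-- `IsBrkt g k x` means that `x` is a `k`-fold Lie bracket of elements of `H`. -/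
inductive IsBrkt (g : ℕ) : ℕ → L g → Prop
  | of (v : H g) : IsBrkt g 1 (toL g v)
  | lie {m n : ℕ} {x y : L g} : IsBrkt g m x → IsBrkt g n y → IsBrkt g (m + n) ⁅x, y⁆

/-- `𝔏ₖ`, the degree-`k` homogeneous component of the free Lie ring:
the `ℤ`-span of all `k`-fold Lie brackets of elements of `H`. -/
def homog (g k : ℕ) : Submodule ℤ (L g) := Submodule.span ℤ {x | IsBrkt g k x}

lemma toL_mem (g : ℕ) (v : H g) : toL g v ∈ homog g 1 :=
  Submodule.subset_span (IsBrkt.of v)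

lemma lie_mem_homog {g m n : ℕ} {x y : L g} (hx : x ∈ homog g m) (hy : y ∈ homog g n) :
    ⁅x, y⁆ ∈ homog g (m + n) := by
  induction hx using Submodule.span_induction with
  | mem a ha =>
    induction hy using Submodule.span_induction with
    | mem b hb => exact Submodule.subset_span (ha.lie hb)
    | zero => simp
    | add b c hb hc ihb ihc => rw [lie_add]; exact Submodule.add_mem _ ihb ihc
    | smul t b hb ihb => rw [lie_smul]; exact Submodule.smul_mem _ t ihb
  | zero => simp
  | add a c ha hc iha ihc => rw [add_lie]; exact Submodule.add_mem _ iha ihc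
  | smul t a ha iha => rw [smul_lie]; exact Submodule.smul_mem _ t iha

/-- `[[a,b],c]` as an element of `𝔏₃`. -/
def trip (g : ℕ) (a b c : H g) : ↥(homog g 3) :=
  ⟨⁅⁅toL g a, toL g b⁆, toL g c⁆,
    Submodule.subset_span (((IsBrkt.of a).lie (IsBrkt.of b)).lie (IsBrkt.of c))⟩

/-- The symplectic element `ω = Σᵢ [aᵢ, bᵢ] ∈ 𝔏₂`. -/
def omegaL (g : ℕ) : L g := ∑ i : Fin g, ⁅toL g (aV g i), toL g (bV g i)⁆

lemma omegaL_mem (g : ℕ) : omegaL g ∈ homog g 2 :=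
  Submodule.sum_mem _ fun i _ =>
    Submodule.subset_span ((IsBrkt.of (aV g i)).lie (IsBrkt.of (bV g i)))

/-- The Lie ideal `⟨⟨ω⟩⟩` of `𝔏` generated by `ω`. -/
def omegaIdeal (g : ℕ) : LieIdeal ℤ (L g) := LieSubmodule.lieSpan ℤ (L g) {omegaL g}

end

noncomputable section

attribute [local instance 100] LieRing.ofAssociativeRing

variable (g : ℕ)

def omegaForm : H g →ₗ[ℤ] H g →ₗ[ℤ] ℤ :=
  LinearMap.mk₂ ℤ (omegaPair g)
    (fun _ _ _ => by
      simp only [omegaPair, Pi.add_apply, ← Finset.sum_add_distrib]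
      exact Finset.sum_congr rfl fun _ _ => by ring)
    (fun _ _ _ => by
      simp only [omegaPair, Pi.smul_apply, smul_eq_mul, Finset.mul_sum]
      exact Finset.sum_congr rfl fun _ _ => by ring)
    (fun _ _ _ => by
      simp only [omegaPair, Pi.add_apply, ← Finset.sum_add_distrib]
      exact Finset.sum_congr rfl fun _ _ => by ring)
    (fun _ _ _ => by
      simp only [omegaPair, Pi.smul_apply, smul_eq_mul, Finset.mul_sum]
      exact Finset.sum_congr rfl fun _ _ => by ring)

variable {g}

lemma omegaPair_swap (x y : H g) : omegaPair g y x = -omegaPair g x y := by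
  simp only [omegaPair, ← Finset.sum_neg_distrib]
  exact Finset.sum_congr rfl fun _ _ => by ring

variable (g)

def ladder : H g →ₗ[ℤ] Module.End ℤ (ℤ × H g × ℤ × H g) :=
  LinearMap.mk₂ ℤ (fun a p => (0, p.1 • a, omegaForm g a p.2.1, p.2.2.1 • a))
    (fun _ _ _ => by simp only [smul_add, map_add, LinearMap.add_apply, Prod.mk_add_mk, add_zero])
    (fun c _ _ => by
      simp only [smul_comm c, map_smul, LinearMap.smul_apply, Prod.smul_mk, smul_zero])
    (fun _ _ _ => by
      simp only [Prod.fst_add, Prod.snd_add, add_smul, map_add, Prod.mk_add_mk, add_zero])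
    (fun c _ _ => by
      simp only [Prod.smul_fst, Prod.smul_snd, smul_assoc, map_smul, Prod.smul_mk, smul_zero])

def ladderRep : L g →ₗ⁅ℤ⁆ Module.End ℤ (ℤ × H g × ℤ × H g) :=
  FreeLieAlgebra.lift ℤ fun i => ladder g (Pi.single i 1)

def contraction : L g →ₗ[ℤ] H g :=
  LinearMap.snd ℤ ℤ (H g) ∘ₗ LinearMap.snd ℤ (H g) (ℤ × H g) ∘ₗ
    LinearMap.snd ℤ ℤ (H g × ℤ × H g) ∘ₗ
    LinearMap.applyₗ ((1, 0, 0, 0) : ℤ × H g × ℤ × H g) ∘ₗ (ladderRep g).toLinearMap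

variable {g}

lemma ladderRep_comp_toL : (ladderRep g).toLinearMap ∘ₗ toL g = ladder g := by
  ext i : 2
  simp only [toL, LinearMap.coe_comp, LinearMap.coe_mk, AddHom.coe_mk, LinearMap.coe_single,
    Function.comp_apply, Pi.single_apply, ite_smul, one_smul, zero_smul, Finset.sum_ite_eq',
    Finset.mem_univ, if_true]
  exact FreeLieAlgebra.lift_of_apply _ _

lemma ladderRep_toL (v : H g) : ladderRep g (toL g v) = ladder g v :=
  LinearMap.congr_fun ladderRep_comp_toL v

lemma ladder_mul_mul_apply (a b c : H g) :
    (ladder g a * ladder g b * ladder g c) (1, 0, 0, 0) = (0, 0, 0, omegaPair g b c • a) := by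
  simp only [ladder, Module.End.mul_apply, LinearMap.mk₂_apply, one_smul, map_zero, zero_smul]
  rfl

lemma contraction_lie_lie (a b c : H g) :
    contraction g ⁅⁅toL g a, toL g b⁆, toL g c⁆ =
      omegaPair g b c • a - omegaPair g a c • b - (2 * omegaPair g a b) • c := by
  simp only [contraction, LinearMap.comp_apply, LieHom.coe_toLinearMap, LieHom.map_lie,
    ladderRep_toL, Ring.lie_def, sub_mul, mul_sub, ← mul_assoc]
  simp only [map_sub, LinearMap.applyₗ_apply_apply, ladder_mul_mul_apply, LinearMap.snd_apply]
  rw [omegaPair_swap b a]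
  module

lemma natCast_zsmul_eq_zero_of_tensor_zmod {M : Type*} [AddCommGroup M] (n : ℕ)
    (x : M ⊗[ℤ] ZMod n) : (n : ℤ) • x = 0 := by
  induction x using TensorProduct.induction_on with
  | zero => exact smul_zero _
  | tmul m r =>
    rw [← TensorProduct.tmul_smul, zsmul_eq_mul, Int.cast_natCast, ZMod.natCast_self, zero_mul,
      TensorProduct.tmul_zero]
  | add x y hx hy => rw [smul_add, hx, hy, add_zero]

lemma sub_eq_add_of_tensor_zmod_two {M : Type*} [AddCommGroup M] (x y : M ⊗[ℤ] ZMod 2) :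
    x - y = x + y := by
  rw [sub_eq_add_neg, neg_eq_of_add_eq_zero_left]
  exact (two_zsmul y).symm.trans (natCast_zsmul_eq_zero_of_tensor_zmod 2 y)

end

theorem stmt0_general (g : ℕ) :
    ∃ σ : (↥(homog g 3) ⊗[ℤ] ZMod 2) →ₗ[ℤ] (H g ⊗[ℤ] ZMod 2),
      ∀ a b c : H g,
        σ (trip g a b c ⊗ₜ (1 : ZMod 2)) =
          omegaPair g b c • (a ⊗ₜ (1 : ZMod 2)) + omegaPair g a c • (b ⊗ₜ (1 : ZMod 2)) := by
  refine ⟨(contraction g ∘ₗ (homog g 3).subtype).rTensor (ZMod 2), fun a b c => ?_⟩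
  calc _ = (omegaPair g b c • a - omegaPair g a c • b - (2 * omegaPair g a b) • c)
          ⊗ₜ[ℤ] (1 : ZMod 2) :=
        congrArg (· ⊗ₜ[ℤ] (1 : ZMod 2)) (contraction_lie_lie a b c)
    _ = omegaPair g b c • (a ⊗ₜ[ℤ] (1 : ZMod 2)) - omegaPair g a c • (b ⊗ₜ[ℤ] (1 : ZMod 2))
          - omegaPair g a b • (2 : ℤ) • (c ⊗ₜ[ℤ] (1 : ZMod 2)) := by
        simp only [TensorProduct.sub_tmul, ← TensorProduct.smul_tmul', mul_comm (2 : ℤ), mul_smul]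
    _ = _ := by
        rw [show (2 : ℤ) • c ⊗ₜ[ℤ] (1 : ZMod 2) = 0 from natCast_zsmul_eq_zero_of_tensor_zmod 2 _,
          smul_zero, sub_zero, sub_eq_add_of_tensor_zmod_two]

/-- There is a well-defined `ℤ`-linear map
`σ : 𝔏₃ ⊗ ℤ/2ℤ → H ⊗ ℤ/2ℤ` with `σ([[a,b],c] ⊗ 1) = ω(b,c)·(a ⊗ 1) + ω(a,c)·(b ⊗ 1)`. -/
theorem stmt0 (g : ℕ) (hg : 1 ≤ g) :
    ∃ σ : (↥(homog g 3) ⊗[ℤ] ZMod 2) →ₗ[ℤ] (H g ⊗[ℤ] ZMod 2),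
      ∀ a b c : H g,
        σ (trip g a b c ⊗ₜ (1 : ZMod 2)) =
          omegaPair g b c • (a ⊗ₜ (1 : ZMod 2)) + omegaPair g a c • (b ⊗ₜ (1 : ZMod 2)) :=
  stmt0_general g
end

section
/- For every h ∈ H one has σ([ω,h] ⊗ 1) = h ⊗ 1; in particular, σ is a retraction of the map H ⊗ ℤ/2ℤ → 𝔏₃ ⊗ ℤ/2ℤ induced by h ↦ [ω,h]. -/
/-!
Expanding `ω = Σᵢ [aᵢ, bᵢ]`, the defining formula of `σ` gives
`σ([ω, h] ⊗ 1) = Σᵢ ω(bᵢ, h) aᵢ + ω(aᵢ, h) bᵢ = Σᵢ -h(aᵢ) aᵢ + h(bᵢ) bᵢ`,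
the coordinate expansion of `h` up to signs, and signs vanish modulo 2.
Since `ℤ/2ℤ` is generated by `1` as an abelian group, the elements `h ⊗ 1`
generate `H ⊗ ℤ/2ℤ`, so the identity on them makes `σ` a retraction.
-/

open scoped TensorProduct

noncomputable section

lemma omegaBr_mem (g : ℕ) (h : H g) : ⁅omegaL g, toL g h⁆ ∈ homog g 3 := by
  have h2 : (3 : ℕ) = 2 + 1 := rfl
  rw [h2]
  exact lie_mem_homog (omegaL_mem g) (toL_mem g h)

/-- The map `H → 𝔏₃`, `h ↦ [ω, h]`, induced by the bracket with `ω`. -/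
def omBrL (g : ℕ) : H g →ₗ[ℤ] ↥(homog g 3) :=
  LinearMap.codRestrict (homog g 3)
    ((LieAlgebra.ad ℤ (L g) (omegaL g)).comp (toL g))
    (fun h => by simpa using omegaBr_mem g h)

lemma TensorProduct.neg_tmul_one_zmod_two {M : Type*} [AddCommGroup M] (x : M) :
    (-x) ⊗ₜ[ℤ] (1 : ZMod 2) = x ⊗ₜ 1 := by
  rw [TensorProduct.neg_tmul, ← TensorProduct.tmul_neg, ZMod.neg_eq_self_mod_two]

lemma TensorProduct.ext_zmod_tmul_one {n : ℕ} {M P : Type*} [AddCommGroup M] [AddCommGroup P]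
    {f f' : M ⊗[ℤ] ZMod n →ₗ[ℤ] P} (h : ∀ m, f (m ⊗ₜ 1) = f' (m ⊗ₜ 1)) :
    f = f' := by
  refine LinearMap.ext fun x => ?_
  induction x using TensorProduct.induction_on with
  | zero => simp only [map_zero]
  | tmul m z =>
    have hz : m ⊗ₜ[ℤ] z = (z.cast : ℤ) • (m ⊗ₜ[ℤ] (1 : ZMod n)) := by
      rw [← TensorProduct.tmul_smul, zsmul_one, ZMod.intCast_zmod_cast]
    rw [hz, map_zsmul, map_zsmul, h]
  | add x y hx hy => rw [map_add, map_add, hx, hy]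

def symplecticIdx (g : ℕ) : Fin g ⊕ Fin g ≃ Fin (2 * g) :=
  finSumFinEquiv.trans (finCongr (two_mul g).symm)

lemma symplecticIdx_inl (g : ℕ) (i : Fin g) : symplecticIdx g (.inl i) = aIdx g i := rfl

lemma symplecticIdx_inr (g : ℕ) (i : Fin g) : symplecticIdx g (.inr i) = bIdx g i := rfl

lemma aIdx_injective (g : ℕ) : Function.Injective (aIdx g) :=
  (symplecticIdx g).injective.comp Sum.inl_injective

lemma bIdx_injective (g : ℕ) : Function.Injective (bIdx g) :=
  (symplecticIdx g).injective.comp Sum.inr_injective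

lemma aIdx_ne_bIdx (g : ℕ) (i j : Fin g) : aIdx g i ≠ bIdx g j :=
  fun h => Sum.inl_ne_inr ((symplecticIdx g).injective h)

lemma omegaPair_aV (g : ℕ) (i : Fin g) (h : H g) : omegaPair g (aV g i) h = h (bIdx g i) := by
  simp [omegaPair, aV, Pi.single_apply, (aIdx_injective g).eq_iff, aIdx_ne_bIdx]

lemma omegaPair_bV (g : ℕ) (i : Fin g) (h : H g) : omegaPair g (bV g i) h = -h (aIdx g i) := by
  simp [omegaPair, bV, Pi.single_apply, (bIdx_injective g).eq_iff, (aIdx_ne_bIdx g _ _).symm]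

lemma sum_smul_aV_add_smul_bV (g : ℕ) (h : H g) :
    ∑ i, (h (aIdx g i) • aV g i + h (bIdx g i) • bV g i) = h := by
  conv_rhs => rw [← Finset.univ_sum_single h, ← (symplecticIdx g).sum_comp]
  simp only [Fintype.sum_sum_type, Finset.sum_add_distrib, symplecticIdx_inl, symplecticIdx_inr,
    aV, bV, ← Pi.single_smul', smul_eq_mul, mul_one]

lemma omBrL_eq_sum_trip (g : ℕ) (h : H g) :
    omBrL g h = ∑ i, trip g (aV g i) (bV g i) h := by
  apply Subtype.ext
  simp only [omBrL, LinearMap.codRestrict_apply, LinearMap.comp_apply, LieAlgebra.ad_apply,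
    omegaL, sum_lie, Submodule.coe_sum, trip]

lemma sum_omegaPair_smul_tmul_one (g : ℕ) (h : H g) :
    ∑ i, (omegaPair g (bV g i) h • (aV g i ⊗ₜ[ℤ] (1 : ZMod 2)) +
      omegaPair g (aV g i) h • (bV g i ⊗ₜ[ℤ] (1 : ZMod 2))) = h ⊗ₜ 1 := by
  calc _ = ∑ i, (h (aIdx g i) • aV g i + h (bIdx g i) • bV g i) ⊗ₜ[ℤ] (1 : ZMod 2) := by
        refine Finset.sum_congr rfl fun i _ => ?_
        rw [omegaPair_aV, omegaPair_bV, TensorProduct.smul_tmul', TensorProduct.smul_tmul',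
          neg_smul, TensorProduct.neg_tmul_one_zmod_two, TensorProduct.add_tmul]
    _ = h ⊗ₜ 1 := by rw [← TensorProduct.sum_tmul, sum_smul_aV_add_smul_bV]

theorem stmt1_general (g : ℕ)
    (σ : (↥(homog g 3) ⊗[ℤ] ZMod 2) →ₗ[ℤ] (H g ⊗[ℤ] ZMod 2))
    (hσ : ∀ a b c : H g,
      σ (trip g a b c ⊗ₜ (1 : ZMod 2)) =
        omegaPair g b c • (a ⊗ₜ (1 : ZMod 2)) + omegaPair g a c • (b ⊗ₜ (1 : ZMod 2))) :
    (∀ h : H g, σ (omBrL g h ⊗ₜ (1 : ZMod 2)) = h ⊗ₜ (1 : ZMod 2)) ∧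
    σ.comp (LinearMap.rTensor (ZMod 2) (omBrL g)) = LinearMap.id := by
  have hω (h : H g) : σ (omBrL g h ⊗ₜ (1 : ZMod 2)) = h ⊗ₜ (1 : ZMod 2) := by
    rw [omBrL_eq_sum_trip, TensorProduct.sum_tmul, map_sum]
    simp only [hσ, sum_omegaPair_smul_tmul_one]
  exact ⟨hω, TensorProduct.ext_zmod_tmul_one hω⟩

/-- `σ([ω,h] ⊗ 1) = h ⊗ 1` for every `h ∈ H`; in particular `σ` is a
retraction of the map `H ⊗ ℤ/2ℤ → 𝔏₃ ⊗ ℤ/2ℤ` induced by `h ↦ [ω,h]`. -/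
theorem stmt1 (g : ℕ) (hg : 1 ≤ g)
    (σ : (↥(homog g 3) ⊗[ℤ] ZMod 2) →ₗ[ℤ] (H g ⊗[ℤ] ZMod 2))
    (hσ : ∀ a b c : H g,
      σ (trip g a b c ⊗ₜ (1 : ZMod 2)) =
        omegaPair g b c • (a ⊗ₜ (1 : ZMod 2)) + omegaPair g a c • (b ⊗ₜ (1 : ZMod 2))) :
    (∀ h : H g, σ (omBrL g h ⊗ₜ (1 : ZMod 2)) = h ⊗ₜ (1 : ZMod 2)) ∧
    σ.comp (LinearMap.rTensor (ZMod 2) (omBrL g)) = LinearMap.id :=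
  stmt1_general g σ hσ

end
end

section
/- The map σ is Sp(H)-equivariant: for every ψ ∈ Sp(H) and every x ∈ 𝔏₃ ⊗ ℤ/2ℤ one has σ(ψ·x) = ψ·σ(x), where ψ acts on H ⊗ ℤ/2ℤ via its action on H. -/
open scoped TensorProduct

noncomputable section

/-- The functorial extension to `𝔏` of an endomorphism of `H`. -/
def extL (g : ℕ) (ψ : H g →ₗ[ℤ] H g) : L g →ₗ⁅ℤ⁆ L g :=
  FreeLieAlgebra.lift ℤ fun i => toL g (ψ (Pi.single i 1))

lemma extL_of (g : ℕ) (ψ : H g →ₗ[ℤ] H g) (i : Fin (2 * g)) :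
    extL g ψ (FreeLieAlgebra.of ℤ i) = toL g (ψ (Pi.single i 1)) :=
  FreeLieAlgebra.lift_of_apply _ _

lemma pi_decomp {g : ℕ} (v : H g) : v = ∑ i, v i • (Pi.single i 1 : H g) := by
  funext j
  simp [Pi.single_apply]

lemma extL_toL (g : ℕ) (ψ : H g →ₗ[ℤ] H g) (v : H g) :
    extL g ψ (toL g v) = toL g (ψ v) := by
  have lhs : extL g ψ (toL g v) = ∑ i, v i • toL g (ψ (Pi.single i 1)) := by
    rw [show toL g v = ∑ i, v i • FreeLieAlgebra.of ℤ i from rfl,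
      ← LieHom.coe_toLinearMap, map_sum]
    simp [extL_of]
  have rhs : toL g (ψ v) = ∑ i, v i • toL g (ψ (Pi.single i 1)) := by
    conv_lhs => rw [pi_decomp v]
    rw [map_sum, map_sum]
    exact Finset.sum_congr rfl fun i _ => by rw [map_smul, map_smul]
  rw [lhs, rhs]

lemma extL_mem {g : ℕ} (ψ : H g →ₗ[ℤ] H g) {k : ℕ} {x : L g} (hx : x ∈ homog g k) :
    extL g ψ x ∈ homog g k := by
  induction hx using Submodule.span_induction with
  | mem a ha =>
    refine Submodule.subset_span ?_
    induction ha with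
    | of v => rw [extL_toL]; exact IsBrkt.of (ψ v)
    | lie hx hy ihx ihy => rw [LieHom.map_lie]; exact ihx.lie ihy
  | zero => simp
  | add a c _ _ iha ihc => rw [map_add]; exact Submodule.add_mem _ iha ihc
  | smul t a _ iha => rw [map_smul]; exact Submodule.smul_mem _ t iha

/-- The action on `𝔏₃` induced by an endomorphism of `H`. -/
def extL3 (g : ℕ) (ψ : H g →ₗ[ℤ] H g) : ↥(homog g 3) →ₗ[ℤ] ↥(homog g 3) :=
  LinearMap.restrict (extL g ψ).toLinearMap (fun _ hx => extL_mem ψ hx)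

/-!
Both sides are additive in `x`, so it suffices to compare them on generators. The module
`𝔏₃ ⊗ ℤ/2` is spanned by the `[[a,b],c] ⊗ 1`, since `[a,[b,c]] = -[[b,c],a]`. On such a generator
`ψ` maps `[[a,b],c]` to `[[ψa,ψb],ψc]`, and the formula for `σ` is carried along because `ψ`
preserves `ω`.
-/

/- Stated for additive maps: the two `ℤ`-module structures on `M ⊗[ℤ] ZMod n` (the tensor one and
`AddCommGroup.toIntModule`) are not reducibly defeq, which breaks composition of `ℤ`-linear maps. -/
lemma TensorProduct.addMonoidHom_ext_zmod {M N : Type*} [AddCommGroup M] [AddCommGroup N]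
    {n : ℕ} {s : Set M} (hs : Submodule.span ℤ s = ⊤) {f f' : M ⊗[ℤ] ZMod n →+ N}
    (h : ∀ m ∈ s, f (m ⊗ₜ 1) = f' (m ⊗ₜ 1)) : f = f' := by
  let tmulOne : M →+ M ⊗[ℤ] ZMod n := ((TensorProduct.mk ℤ M (ZMod n)).flip 1).toAddMonoidHom
  have hone : ∀ m, f (m ⊗ₜ 1) = f' (m ⊗ₜ 1) :=
    LinearMap.congr_fun <| LinearMap.ext_on (f := (f.comp tmulOne).toIntLinearMap)
      (g := (f'.comp tmulOne).toIntLinearMap) hs h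
  ext x
  induction x using TensorProduct.induction_on with
  | zero => simp only [map_zero]
  | tmul m y =>
    rw [← ZMod.intCast_zmod_cast y, ← zsmul_one, ← TensorProduct.mk_apply, map_zsmul, map_zsmul,
      map_zsmul, TensorProduct.mk_apply, hone]
  | add x y hx hy => rw [map_add, map_add, hx, hy]

namespace IsBrkt

variable {g k : ℕ} {x : L g}

lemma one_le (h : IsBrkt g k x) : 1 ≤ k := by
  induction h <;> omega

lemma exists_eq_toL (h : IsBrkt g k x) (hk : k = 1) : ∃ v, x = toL g v := by
  cases h with
  | of v => exact ⟨v, rfl⟩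
  | lie h₁ h₂ => have := h₁.one_le; have := h₂.one_le; omega

lemma exists_eq_lie_toL (h : IsBrkt g k x) (hk : k = 2) :
    ∃ u v, x = ⁅toL g u, toL g v⁆ := by
  cases h with
  | of v => omega
  | lie h₁ h₂ =>
    have := h₁.one_le; have := h₂.one_le
    obtain ⟨u, rfl⟩ := h₁.exists_eq_toL (by omega)
    obtain ⟨v, rfl⟩ := h₂.exists_eq_toL (by omega)
    exact ⟨u, v, rfl⟩

lemma mem_span_leftNormed (h : IsBrkt g k x) (hk : k = 3) :
    x ∈ Submodule.span ℤ
      (Set.range fun p : H g × H g × H g => ⁅⁅toL g p.1, toL g p.2.1⁆, toL g p.2.2⁆) := by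
  cases h with
  | of v => omega
  | @lie m n _ _ h₁ h₂ =>
    have := h₁.one_le; have := h₂.one_le
    obtain ⟨hm, hn⟩ | ⟨hm, hn⟩ : (m = 2 ∧ n = 1) ∨ (m = 1 ∧ n = 2) := by omega
    · obtain ⟨a, b, rfl⟩ := h₁.exists_eq_lie_toL hm
      obtain ⟨c, rfl⟩ := h₂.exists_eq_toL hn
      exact Submodule.subset_span ⟨(a, b, c), rfl⟩
    · obtain ⟨a, rfl⟩ := h₁.exists_eq_toL hm
      obtain ⟨b, c, rfl⟩ := h₂.exists_eq_lie_toL hn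
      rw [← lie_skew]
      exact Submodule.neg_mem _ (Submodule.subset_span ⟨(b, c, a), rfl⟩)

end IsBrkt

lemma span_range_trip (g : ℕ) :
    Submodule.span ℤ (Set.range fun p : H g × H g × H g => trip g p.1 p.2.1 p.2.2) = ⊤ := by
  apply Submodule.map_injective_of_injective (homog g 3).injective_subtype
  rw [Submodule.map_span, Submodule.map_subtype_top, ← Set.range_comp]
  refine le_antisymm (Submodule.span_le.mpr ?_) (Submodule.span_le.mpr fun x hx => ?_)
  · rintro _ ⟨p, rfl⟩
    exact (trip g p.1 p.2.1 p.2.2).2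
  · exact hx.mem_span_leftNormed rfl

lemma extL3_trip (g : ℕ) (ψ : H g →ₗ[ℤ] H g) (a b c : H g) :
    extL3 g ψ (trip g a b c) = trip g (ψ a) (ψ b) (ψ c) := by
  apply Subtype.ext
  change extL g ψ ⁅⁅toL g a, toL g b⁆, toL g c⁆ = _
  rw [LieHom.map_lie, LieHom.map_lie, extL_toL, extL_toL, extL_toL]
  rfl

theorem stmt3_general (g : ℕ)
    (σ : (↥(homog g 3) ⊗[ℤ] ZMod 2) →ₗ[ℤ] (H g ⊗[ℤ] ZMod 2))
    (hσ : ∀ a b c : H g,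
      σ (trip g a b c ⊗ₜ (1 : ZMod 2)) =
        omegaPair g b c • (a ⊗ₜ (1 : ZMod 2)) + omegaPair g a c • (b ⊗ₜ (1 : ZMod 2)))
    (ψ : H g ≃ₗ[ℤ] H g)
    (hψ : ∀ x y : H g, omegaPair g (ψ x) (ψ y) = omegaPair g x y) :
    ∀ x : ↥(homog g 3) ⊗[ℤ] ZMod 2,
      σ (LinearMap.rTensor (ZMod 2) (extL3 g ψ.toLinearMap) x) =
        LinearMap.rTensor (ZMod 2) ψ.toLinearMap (σ x) := by
  suffices σ.toAddMonoidHom.comp ((extL3 g ψ.toLinearMap).rTensor (ZMod 2)).toAddMonoidHom =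
      (ψ.toLinearMap.rTensor (ZMod 2)).toAddMonoidHom.comp σ.toAddMonoidHom from
    DFunLike.congr_fun this
  refine TensorProduct.addMonoidHom_ext_zmod (span_range_trip g) ?_
  rintro _ ⟨⟨a, b, c⟩, rfl⟩
  simp only [AddMonoidHom.comp_apply, LinearMap.toAddMonoidHom_coe, LinearMap.rTensor_tmul,
    extL3_trip, LinearEquiv.coe_coe, hσ, hψ, map_add, map_zsmul]

/-- `σ` is `Sp(H)`-equivariant. -/
theorem stmt3 (g : ℕ) (hg : 1 ≤ g)
    (σ : (↥(homog g 3) ⊗[ℤ] ZMod 2) →ₗ[ℤ] (H g ⊗[ℤ] ZMod 2))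
    (hσ : ∀ a b c : H g,
      σ (trip g a b c ⊗ₜ (1 : ZMod 2)) =
        omegaPair g b c • (a ⊗ₜ (1 : ZMod 2)) + omegaPair g a c • (b ⊗ₜ (1 : ZMod 2)))
    (ψ : H g ≃ₗ[ℤ] H g)
    (hψ : ∀ x y : H g, omegaPair g (ψ x) (ψ y) = omegaPair g x y) :
    ∀ x : ↥(homog g 3) ⊗[ℤ] ZMod 2,
      σ (LinearMap.rTensor (ZMod 2) (extL3 g ψ.toLinearMap) x) =
        LinearMap.rTensor (ZMod 2) ψ.toLinearMap (σ x) :=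
  stmt3_general g σ hσ ψ hψ

end
end

section
/- The ℤ-linear map H ⊗ (⟨⟨ω⟩⟩ ∩ 𝔏₅) → ⟨⟨ω⟩⟩ ∩ 𝔏₆ defined on elementary tensors by h ⊗ u ↦ [h,u] is surjective. -/
/-!
Let `Cₙ` be the span of the iterated brackets `[h₁,[h₂,…,[hₙ,ω]…]]` with `hᵢ ∈ H`, so that
`C₀ = ℤω` and `Cₙ₊₁ = [H, Cₙ]`. Each `Cₙ` lies in `⟨⟨ω⟩⟩ ∩ 𝔏ₙ₊₂`, and `Σₙ Cₙ` is closed under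
bracketing with the generators, hence is an ideal and contains `⟨⟨ω⟩⟩`. Projecting onto degree
`n + 2` gives `⟨⟨ω⟩⟩ ∩ 𝔏ₙ₊₂ = Cₙ`; for `n = 4` this is `[H, C₃] = [H, ⟨⟨ω⟩⟩ ∩ 𝔏₅]`.
Over `ℤ` the projection onto `𝔏ₖ` is the `Xᵏ`-coefficient of the Lie map `𝔏 → ℤ[X] ⊗ 𝔏`
extending `x ↦ X ⊗ x` on generators.
-/

open scoped TensorProduct

noncomputable section

/-- The bilinear bracket map `H × (⟨⟨ω⟩⟩ ∩ 𝔏₅) → 𝔏`, `(h, u) ↦ [h, u]`. -/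
def brI56 (g : ℕ) :
    H g →ₗ[ℤ] ↥((omegaIdeal g).toSubmodule ⊓ homog g 5) →ₗ[ℤ] L g :=
  LinearMap.mk₂ ℤ (fun h u => ⁅toL g h, (u : L g)⁆)
    (fun h₁ h₂ u => by rw [map_add, add_lie])
    (fun c h u => by rw [map_smul, smul_lie])
    (fun h u₁ u₂ => by simp only [Submodule.coe_add]; rw [lie_add])
    (fun c h u => by simp only [Submodule.coe_smul]; rw [lie_smul])

/-- The induced map `H ⊗ (⟨⟨ω⟩⟩ ∩ 𝔏₅) → 𝔏`, `h ⊗ u ↦ [h, u]`. -/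
def brMap56 (g : ℕ) :
    (H g ⊗[ℤ] ↥((omegaIdeal g).toSubmodule ⊓ homog g 5)) →ₗ[ℤ] L g :=
  TensorProduct.lift (brI56 g)

namespace FreeLieAlgebra

variable {R X : Type*} [CommRing R]

theorem mem_of_forall_of_mem (K : LieSubalgebra R (FreeLieAlgebra R X))
    (hK : ∀ i, of R i ∈ K) (x : FreeLieAlgebra R X) : x ∈ K := by
  let f : FreeLieAlgebra R X →ₗ⁅R⁆ K := lift R fun i => ⟨of R i, hK i⟩
  have hf : K.incl.comp f = LieHom.id := hom_ext fun i => by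
    simp [f, lift_of_apply]
  have hx : K.incl (f x) = x := LieHom.congr_fun hf x
  exact hx ▸ (f x).2

theorem lie_mem_of_forall_of_lie_mem (N : Submodule R (FreeLieAlgebra R X))
    (hN : ∀ i : X, ∀ u ∈ N, ⁅of R i, u⁆ ∈ N) (x : FreeLieAlgebra R X) {u : FreeLieAlgebra R X}
    (hu : u ∈ N) : ⁅x, u⁆ ∈ N := by
  let stabilizer : LieSubalgebra R (FreeLieAlgebra R X) :=
    { carrier := {x | ∀ u ∈ N, ⁅x, u⁆ ∈ N}
      add_mem' := fun hx hy u hu => by rw [add_lie]; exact N.add_mem (hx u hu) (hy u hu)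
      zero_mem' := fun u _ => by rw [zero_lie]; exact N.zero_mem
      smul_mem' := fun c x hx u hu => by rw [smul_lie]; exact N.smul_mem c (hx u hu)
      lie_mem' := fun hx hy u hu => by
        rw [lie_lie]; exact N.sub_mem (hx _ (hy u hu)) (hy _ (hx u hu)) }
  exact mem_of_forall_of_mem stabilizer hN x u hu

end FreeLieAlgebra

lemma toL_single (g : ℕ) (i : Fin (2 * g)) :
    toL g (Pi.single i 1) = FreeLieAlgebra.of ℤ i := by
  simp [toL, Pi.single_apply, ite_smul]

section DegreeProjection

open Polynomial

def degreeMarker (g : ℕ) : L g →ₗ⁅ℤ⁆ ℤ[X] ⊗[ℤ] L g :=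
  FreeLieAlgebra.lift ℤ fun i => X ⊗ₜ FreeLieAlgebra.of ℤ i

lemma degreeMarker_toL (g : ℕ) (v : H g) : degreeMarker g (toL g v) = X ⊗ₜ toL g v := by
  change (degreeMarker g).toLinearMap (toL g v) = _
  simp only [toL, LinearMap.coe_mk, AddHom.coe_mk, map_sum, map_smul, TensorProduct.tmul_sum,
    TensorProduct.tmul_smul, LieHom.coe_toLinearMap]
  exact Finset.sum_congr rfl fun i _ => congrArg _ (FreeLieAlgebra.lift_of_apply _ i)

lemma degreeMarker_of_mem_homog {g k : ℕ} {u : L g} (hu : u ∈ homog g k) :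
    degreeMarker g u = (X ^ k : ℤ[X]) ⊗ₜ u := by
  induction hu using Submodule.span_induction with
  | mem a ha =>
    induction ha with
    | of v => rw [degreeMarker_toL, pow_one]
    | lie _ _ ihx ihy =>
      rw [LieHom.map_lie, ihx, ihy, LieAlgebra.ExtendScalars.bracket_tmul, pow_add]
  | zero => simp
  | add a b _ _ iha ihb => rw [map_add, iha, ihb, TensorProduct.tmul_add]
  | smul t a _ iha => rw [map_smul, iha, TensorProduct.tmul_smul]

def degProj (g k : ℕ) : L g →ₗ[ℤ] L g :=
  (TensorProduct.lid ℤ (L g)).toLinearMap ∘ₗ TensorProduct.map (lcoeff ℤ k) LinearMap.id ∘ₗ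
    (degreeMarker g).toLinearMap

lemma degProj_of_mem_homog {g k m : ℕ} {u : L g} (hu : u ∈ homog g m) :
    degProj g k u = if k = m then u else 0 := by
  change TensorProduct.lid ℤ (L g) (TensorProduct.map (lcoeff ℤ k) LinearMap.id
    (degreeMarker g u)) = _
  rw [degreeMarker_of_mem_homog hu]
  simp [coeff_X_pow]

lemma mem_of_mem_iSup_of_mem_homog {g : ℕ} {ι : Type*} {S : ι → Submodule ℤ (L g)}
    {d : ι → ℕ} (hd : Function.Injective d) (hS : ∀ i, S i ≤ homog g (d i))
    {u : L g} (hu : u ∈ ⨆ i, S i) {i : ι} (hui : u ∈ homog g (d i)) : u ∈ S i := by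
  have hle : ⨆ j, S j ≤ (S i).comap (degProj g (d i)) := iSup_le fun j v hv => by
    rw [Submodule.mem_comap, degProj_of_mem_homog (hS j hv)]
    split_ifs with h
    · rwa [hd h]
    · exact (S i).zero_mem
  simpa [degProj_of_mem_homog hui] using hle hu

end DegreeProjection

def omegaLayer (g : ℕ) : ℕ → Submodule ℤ (L g)
  | 0 => Submodule.span ℤ {omegaL g}
  | n + 1 => Submodule.span ℤ {x | ∃ h u, u ∈ omegaLayer g n ∧ x = ⁅toL g h, u⁆}

lemma omegaLayer_le_homog (g : ℕ) : ∀ n, omegaLayer g n ≤ homog g (n + 2)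
  | 0 => by
    rw [omegaLayer, Submodule.span_le, Set.singleton_subset_iff]
    exact omegaL_mem g
  | n + 1 => by
    rw [omegaLayer, Submodule.span_le]
    rintro x ⟨h, u, hu, rfl⟩
    rw [show n + 1 + 2 = 1 + (n + 2) by omega]
    exact lie_mem_homog (toL_mem g h) (omegaLayer_le_homog g n hu)

lemma omegaLayer_le_omegaIdeal (g : ℕ) : ∀ n, omegaLayer g n ≤ (omegaIdeal g).toSubmodule
  | 0 => by
    rw [omegaLayer, Submodule.span_le, Set.singleton_subset_iff]
    exact LieSubmodule.subset_lieSpan rfl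
  | n + 1 => by
    rw [omegaLayer, Submodule.span_le]
    rintro x ⟨h, u, hu, rfl⟩
    exact (omegaIdeal g).lie_mem (omegaLayer_le_omegaIdeal g n hu)

lemma omegaIdeal_le_iSup_omegaLayer (g : ℕ) :
    (omegaIdeal g).toSubmodule ≤ ⨆ n, omegaLayer g n := by
  have hgen : ∀ (i : Fin (2 * g)), ∀ u ∈ ⨆ n, omegaLayer g n,
      ⁅FreeLieAlgebra.of ℤ i, u⁆ ∈ ⨆ n, omegaLayer g n := by
    intro i u hu
    induction hu using Submodule.iSup_induction' with
    | mem n v hv =>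
      refine Submodule.mem_iSup_of_mem (n + 1) (Submodule.subset_span ⟨Pi.single i 1, v, hv, ?_⟩)
      rw [toL_single]
    | zero => rw [lie_zero]; exact Submodule.zero_mem _
    | add v w _ _ hv hw => rw [lie_add]; exact Submodule.add_mem _ hv hw
  let sumIdeal : LieIdeal ℤ (L g) :=
    { toSubmodule := ⨆ n, omegaLayer g n
      lie_mem := fun hu => FreeLieAlgebra.lie_mem_of_forall_of_lie_mem _ hgen _ hu }
  change omegaIdeal g ≤ sumIdeal
  rw [omegaIdeal, LieSubmodule.lieSpan_le, Set.singleton_subset_iff]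
  exact Submodule.mem_iSup_of_mem 0 (Submodule.subset_span rfl)

theorem omegaLayer_eq (g n : ℕ) :
    omegaLayer g n = (omegaIdeal g).toSubmodule ⊓ homog g (n + 2) := by
  refine le_antisymm (le_inf (omegaLayer_le_omegaIdeal g n) (omegaLayer_le_homog g n)) ?_
  rintro u ⟨huI, hu⟩
  exact mem_of_mem_iSup_of_mem_homog (add_left_injective 2) (omegaLayer_le_homog g)
    (omegaIdeal_le_iSup_omegaLayer g huI) hu

lemma brMap56_tmul (g : ℕ) (h : H g) (u : ↥((omegaIdeal g).toSubmodule ⊓ homog g 5)) :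
    brMap56 g (h ⊗ₜ u) = ⁅toL g h, (u : L g)⁆ := by
  erw [brMap56, TensorProduct.lift.tmul]
  rfl

lemma range_brMap56 (g : ℕ) :
    LinearMap.range (brMap56 g) = Submodule.span ℤ
      {x | ∃ h u, u ∈ (omegaIdeal g).toSubmodule ⊓ homog g 5 ∧ x = ⁅toL g h, u⁆} := by
  refine le_antisymm ?_ (Submodule.span_le.mpr ?_)
  · rintro _ ⟨t, rfl⟩
    induction t using TensorProduct.induction_on with
    | zero => rw [map_zero]; exact Submodule.zero_mem _
    | tmul h u => rw [brMap56_tmul]; exact Submodule.subset_span ⟨h, u, u.2, rfl⟩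
    | add a b ha hb => rw [map_add]; exact Submodule.add_mem _ ha hb
  · rintro _ ⟨h, u, hu, rfl⟩
    exact ⟨h ⊗ₜ ⟨u, hu⟩, brMap56_tmul g h _⟩

theorem stmt8_general (g : ℕ) :
    LinearMap.range (brMap56 g) = (omegaIdeal g).toSubmodule ⊓ homog g 6 := by
  rw [range_brMap56, ← omegaLayer_eq g 3, ← omegaLayer_eq g 4]
  rfl

theorem stmt8 (g : ℕ) (hg : 1 ≤ g) :
    LinearMap.range (brMap56 g) = (omegaIdeal g).toSubmodule ⊓ homog g 6 :=
  stmt8_general g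

end
end

section
/- Let 𝔤 = ⊕_{k≥1} 𝔤ₖ be a graded Lie algebra over ℚ (so [𝔤ᵢ,𝔤ⱼ] ⊆ 𝔤_{i+j}) that is generated in degree 1, in the sense that 𝔤_{k+1} = [𝔤₁,𝔤ₖ] for every k ≥ 1. If 𝔤₄ = [𝔤₂,𝔤₂], then for every j ≥ 4 one has 𝔤ⱼ = Σ_{a,b ≥ 2, a+b = j} [𝔤ₐ,𝔤_b]; equivalently, the degree-j part of the abelianization of the derived subalgebra 𝔤′ = ⊕_{k≥2} 𝔤ₖ vanishes for every j ≥ 4. -/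
noncomputable section

/-- For subspaces `A`, `B` of a Lie algebra, `[A,B]` denotes the span of brackets. -/
def brSpan {𝔤 : Type*} [LieRing 𝔤] [LieAlgebra ℚ 𝔤] (A B : Submodule ℚ 𝔤) :
    Submodule ℚ 𝔤 :=
  Submodule.span ℚ {z | ∃ a ∈ A, ∃ b ∈ B, z = ⁅a, b⁆}

theorem stmt10 {𝔤 : Type*} [LieRing 𝔤] [LieAlgebra ℚ 𝔤]
    (G : ℕ → Submodule ℚ 𝔤)
    (hzero : G 0 = ⊥)
    (hinternal : DirectSum.IsInternal G)
    (hgrade : ∀ i j : ℕ, 1 ≤ i → 1 ≤ j → ∀ x ∈ G i, ∀ y ∈ G j, ⁅x, y⁆ ∈ G (i + j))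
    (hgen : ∀ k : ℕ, 1 ≤ k → G (k + 1) = brSpan (G 1) (G k))
    (h4 : G 4 = brSpan (G 2) (G 2)) :
    ∀ j : ℕ, 4 ≤ j →
      G j = ⨆ (p : ℕ × ℕ) (_ : 2 ≤ p.1) (_ : 2 ≤ p.2) (_ : p.1 + p.2 = j),
        brSpan (G p.1) (G p.2) := by
  set RHS : ℕ → Submodule ℚ 𝔤 := fun j =>
    ⨆ (p : ℕ × ℕ) (_ : 2 ≤ p.1) (_ : 2 ≤ p.2) (_ : p.1 + p.2 = j),
      brSpan (G p.1) (G p.2) with hRHS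
  have hle : ∀ p q j : ℕ, 2 ≤ p → 2 ≤ q → p + q = j →
      brSpan (G p) (G q) ≤ RHS j := by
    intro p q j hp hq hpq
    have := le_iSup (fun r : ℕ × ℕ =>
      ⨆ (_ : 2 ≤ r.1) (_ : 2 ≤ r.2) (_ : r.1 + r.2 = j),
        brSpan (G r.1) (G r.2)) (p, q)
    refine le_trans ?_ this
    simp [hp, hq, hpq]
  have hRHSle : ∀ j : ℕ, RHS j ≤ G j := by
    intro j
    refine iSup_le fun p => iSup_le fun h1 => iSup_le fun h2 => iSup_le fun hpq => ?_
    rw [← hpq]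
    refine Submodule.span_le.mpr ?_
    rintro z ⟨a, ha, b, hb, rfl⟩
    exact hgrade _ _ (by omega) (by omega) a ha b hb
  intro j hj
  induction j, hj using Nat.le_induction with
  | base =>
    refine le_antisymm ?_ (hRHSle 4)
    rw [h4]
    exact hle 2 2 4 le_rfl le_rfl rfl
  | succ n hn ih =>
    refine le_antisymm ?_ (hRHSle _)
    rw [hgen n (by omega)]
    refine Submodule.span_le.mpr ?_
    rintro z ⟨a, ha, b, hb, rfl⟩
    rw [ih] at hb
    have hb' : (LieAlgebra.ad ℚ 𝔤 a) b ∈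
        Submodule.map (LieAlgebra.ad ℚ 𝔤 a) (RHS n) := Submodule.mem_map_of_mem hb
    have hmap : Submodule.map (LieAlgebra.ad ℚ 𝔤 a) (RHS n) ≤ RHS (n + 1) := by
      rw [hRHS]
      simp only [Submodule.map_iSup]
      refine iSup_le fun p => iSup_le fun h1 => iSup_le fun h2 => iSup_le fun hpq => ?_
      rw [brSpan, Submodule.map_span]
      refine Submodule.span_le.mpr ?_
      rintro z ⟨w, ⟨u, hu, v, hv, rfl⟩, rfl⟩
      have : (LieAlgebra.ad ℚ 𝔤 a) ⁅u, v⁆ = ⁅⁅a, u⁆, v⁆ + ⁅u, ⁅a, v⁆⁆ := by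
        rw [LieAlgebra.ad_apply]; exact leibniz_lie a u v
      rw [this]
      refine Submodule.add_mem _ ?_ ?_
      · refine hle (p.1 + 1) p.2 (n + 1) (by omega) h2 (by omega) ?_
        exact Submodule.subset_span ⟨⁅a, u⁆, by
          have := hgrade 1 p.1 le_rfl (by omega) a ha u hu
          rwa [Nat.add_comm] at this, v, hv, rfl⟩
      · refine hle p.1 (p.2 + 1) (n + 1) h1 (by omega) (by omega) ?_
        exact Submodule.subset_span ⟨u, hu, ⁅a, v⁆, by
          have := hgrade 1 p.2 le_rfl (by omega) a ha v hv
          rwa [Nat.add_comm] at this, rfl⟩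
    have := hmap hb'
    simpa [LieAlgebra.ad_apply] using this

end
end
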